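/- Let N ≥ 2, α, β > 0, λ, μ > 0, and define the operators T̃₁(v)(t) = ∫_t^1 (∫_0^s N τ^{N-1} λ v(τ)^α dτ)^{1/N} ds and T̃₂(v)(t) = ∫_t^1 (∫_0^s N τ^{N-1} μ v(τ)^β dτ)^{1/N} ds on the cone K = {v ∈ C[0,1] : v ≥ 0, min_{[1/4,3/4]} v ≥ (1/4)‖v‖}, and T̃ = T̃₁ ∘ T̃₂. If αβ = N² and v ∈ K ∖ {0} is a fixed point of T̃, then λ μ^{α/N} ≥ 1. -/

import Mathlib

/-!
If `0 ≤ v ≤ M` on `[0,1]` then the inner integral of `T_{c,γ} v` is at most `c M^γ s^N ≤ c M^γ`,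
because `∫₀ˢ N τ^(N-1) dτ = s^N`; hence `‖T_{c,γ} v‖ ≤ (c M^γ)^(1/N)`. Applied twice to a
fixed point `v = T_{λ,α} (T_{μ,β} v)` with `M = ‖v‖ > 0` this gives
`M ≤ λ^(1/N) μ^(α/N²) M^(αβ/N²) = λ^(1/N) μ^(α/N²) M`, so `λ μ^(α/N) ≥ 1`.
-/

open Set MeasureTheory intervalIntegral

/-- Supremum norm on `C[0,1]`. -/
noncomputable def supNorm (v : ℝ → ℝ) : ℝ :=
  sSup ((fun t => |v t|) '' Icc (0:ℝ) 1)

/-- Membership in the cone `K ⊂ C[0,1]`. -/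
def memK (v : ℝ → ℝ) : Prop :=
  ContinuousOn v (Icc (0:ℝ) 1) ∧ (∀ t ∈ Icc (0:ℝ) 1, 0 ≤ v t) ∧
    ∀ t ∈ Icc (1/4 : ℝ) (3/4), (1/4) * supNorm v ≤ v t

/-- The solution operator with parameter `c` and exponent `γ`. -/
noncomputable def MAopc (N : ℕ) (c γ : ℝ) (v : ℝ → ℝ) : ℝ → ℝ :=
  fun t => ∫ s in t..(1:ℝ),
    (∫ τ in (0:ℝ)..s, (N:ℝ) * τ ^ (N - 1) * (c * v τ ^ γ)) ^ ((N:ℝ)⁻¹)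

section supNorm

variable {v : ℝ → ℝ}

lemma le_supNorm (hv : ContinuousOn v (Icc 0 1)) {t : ℝ} (ht : t ∈ Icc (0:ℝ) 1) :
    |v t| ≤ supNorm v :=
  le_csSup (isCompact_Icc.image_of_continuousOn hv.abs).bddAbove ⟨t, ht, rfl⟩

lemma supNorm_le {B : ℝ} (hB : ∀ t ∈ Icc (0:ℝ) 1, |v t| ≤ B) : supNorm v ≤ B :=
  csSup_le ((nonempty_Icc.2 zero_le_one).image _) (forall_mem_image.2 hB)

lemma supNorm_pos (hv : ContinuousOn v (Icc 0 1)) (hne : ∃ t ∈ Icc (0:ℝ) 1, v t ≠ 0) :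
    0 < supNorm v := by
  obtain ⟨t, ht, hvt⟩ := hne
  exact (abs_pos.2 hvt).trans_le (le_supNorm hv ht)

end supNorm

section IntervalIntegrals

variable {g : ℝ → ℝ}

lemma continuousOn_integral_from_zero (hg : ContinuousOn g (Icc 0 1)) :
    ContinuousOn (fun t => ∫ s in (0:ℝ)..t, g s) (Icc 0 1) := by
  rw [← uIcc_of_le zero_le_one] at hg ⊢
  exact continuousOn_primitive_interval hg.integrableOn_uIcc

lemma continuousOn_integral_to_one (hg : ContinuousOn g (Icc 0 1)) :
    ContinuousOn (fun t => ∫ s in t..1, g s) (Icc 0 1) := by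
  rw [← uIcc_of_le zero_le_one] at hg ⊢
  exact continuousOn_primitive_interval_left hg.integrableOn_uIcc

lemma integral_to_one_le {B t : ℝ} (hg : ContinuousOn g (Icc 0 1))
    (hg0 : ∀ s ∈ Icc (0:ℝ) 1, 0 ≤ g s) (hgB : ∀ s ∈ Icc (0:ℝ) 1, g s ≤ B)
    (ht : t ∈ Icc (0:ℝ) 1) : ∫ s in t..1, g s ≤ B := by
  have hB : 0 ≤ B :=
    (hg0 1 (right_mem_Icc.2 zero_le_one)).trans (hgB 1 (right_mem_Icc.2 zero_le_one))
  have hsub : Icc t 1 ⊆ Icc 0 1 := Icc_subset_Icc_left ht.1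
  calc ∫ s in t..1, g s ≤ ∫ _ in t..1, B :=
        integral_mono_on ht.2 ((hg.mono hsub).intervalIntegrable_of_Icc ht.2)
          intervalIntegrable_const fun s hs => hgB s (hsub hs)
    _ = (1 - t) * B := by rw [intervalIntegral.integral_const, smul_eq_mul]
    _ ≤ B := by nlinarith [ht.1]

end IntervalIntegrals

lemma integral_natCast_mul_pow_pred {N : ℕ} (hN : 0 < N) (s : ℝ) :
    ∫ τ in (0:ℝ)..s, (N:ℝ) * τ ^ (N - 1) = s ^ N := by
  have hN' : (N:ℝ) ≠ 0 := by positivity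
  rw [intervalIntegral.integral_const_mul, integral_pow, Nat.sub_add_cancel hN, Nat.cast_pred hN,
    sub_add_cancel, zero_pow hN.ne', sub_zero, mul_div_cancel₀ _ hN']

noncomputable def MAinner (N : ℕ) (c γ : ℝ) (v : ℝ → ℝ) (s : ℝ) : ℝ :=
  ∫ τ in (0:ℝ)..s, (N:ℝ) * τ ^ (N - 1) * (c * v τ ^ γ)

noncomputable def MAbound (N : ℕ) (c γ M : ℝ) : ℝ :=
  (c * M ^ γ) ^ (N:ℝ)⁻¹

section MAopc

variable {N : ℕ} {c γ M : ℝ} {v : ℝ → ℝ}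

lemma continuousOn_MAintegrand {S : Set ℝ} (hγ : 0 ≤ γ) (hv : ContinuousOn v S) :
    ContinuousOn (fun τ => (N:ℝ) * τ ^ (N - 1) * (c * v τ ^ γ)) S :=
  (continuous_const.mul (continuous_pow _)).continuousOn.mul
    (continuousOn_const.mul (hv.rpow_const fun _ _ => Or.inr hγ))

lemma continuousOn_MAinner (hγ : 0 ≤ γ) (hv : ContinuousOn v (Icc 0 1)) :
    ContinuousOn (MAinner N c γ v) (Icc 0 1) :=
  continuousOn_integral_from_zero (continuousOn_MAintegrand hγ hv)

lemma MAinner_nonneg (hc : 0 ≤ c) (hv0 : ∀ t ∈ Icc (0:ℝ) 1, 0 ≤ v t) {s : ℝ}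
    (hs : s ∈ Icc (0:ℝ) 1) : 0 ≤ MAinner N c γ v s :=
  integral_nonneg hs.1 fun τ hτ => by
    have := hv0 τ ⟨hτ.1, hτ.2.trans hs.2⟩
    have := hτ.1
    positivity

lemma MAinner_le (hN : 0 < N) (hc : 0 ≤ c) (hγ : 0 ≤ γ) (hv : ContinuousOn v (Icc 0 1))
    (hv0 : ∀ t ∈ Icc (0:ℝ) 1, 0 ≤ v t) (hvM : ∀ t ∈ Icc (0:ℝ) 1, v t ≤ M) {s : ℝ}
    (hs : s ∈ Icc (0:ℝ) 1) : MAinner N c γ v s ≤ c * M ^ γ := by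
  have hsub : Icc 0 s ⊆ Icc 0 1 := Icc_subset_Icc_right hs.2
  have hM : 0 ≤ M :=
    (hv0 0 (left_mem_Icc.2 zero_le_one)).trans (hvM 0 (left_mem_Icc.2 zero_le_one))
  calc MAinner N c γ v s ≤ ∫ τ in (0:ℝ)..s, (N:ℝ) * τ ^ (N - 1) * (c * M ^ γ) := by
        refine integral_mono_on hs.1
          ((continuousOn_MAintegrand hγ (hv.mono hsub)).intervalIntegrable_of_Icc hs.1)
          ((by fun_prop : Continuous fun τ : ℝ => (N:ℝ) * τ ^ (N - 1) * (c * M ^ γ)).intervalIntegrable _ _)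
          fun τ hτ => ?_
        have hτ1 := hsub hτ
        have := hτ.1
        gcongr
        · exact hv0 τ hτ1
        · exact hvM τ hτ1
    _ = c * M ^ γ * s ^ N := by
        rw [intervalIntegral.integral_mul_const, integral_natCast_mul_pow_pred hN, mul_comm]
    _ ≤ c * M ^ γ := mul_le_of_le_one_right (by positivity) (pow_le_one₀ hs.1 hs.2)

lemma continuousOn_MAopc (hγ : 0 ≤ γ) (hv : ContinuousOn v (Icc 0 1)) :
    ContinuousOn (MAopc N c γ v) (Icc 0 1) :=
  continuousOn_integral_to_one <|
    (continuousOn_MAinner hγ hv).rpow_const fun _ _ => Or.inr (by positivity)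

lemma MAopc_nonneg (hc : 0 ≤ c) (hv0 : ∀ t ∈ Icc (0:ℝ) 1, 0 ≤ v t) {t : ℝ}
    (ht : t ∈ Icc (0:ℝ) 1) : 0 ≤ MAopc N c γ v t :=
  integral_nonneg ht.2 fun _ hs =>
    Real.rpow_nonneg (MAinner_nonneg hc hv0 ⟨ht.1.trans hs.1, hs.2⟩) _

lemma MAopc_le (hN : 0 < N) (hc : 0 ≤ c) (hγ : 0 ≤ γ) (hv : ContinuousOn v (Icc 0 1))
    (hv0 : ∀ t ∈ Icc (0:ℝ) 1, 0 ≤ v t) (hvM : ∀ t ∈ Icc (0:ℝ) 1, v t ≤ M) {t : ℝ}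
    (ht : t ∈ Icc (0:ℝ) 1) : MAopc N c γ v t ≤ MAbound N c γ M :=
  integral_to_one_le ((continuousOn_MAinner hγ hv).rpow_const fun _ _ => Or.inr (by positivity))
    (fun s hs => Real.rpow_nonneg (MAinner_nonneg hc hv0 hs) _)
    (fun s hs => Real.rpow_le_rpow (MAinner_nonneg hc hv0 hs)
      (MAinner_le hN hc hγ hv hv0 hvM hs) (by positivity)) ht

end MAopc

lemma log_MAbound {N : ℕ} {c γ M : ℝ} (hc : 0 < c) (hM : 0 < M) :
    Real.log (MAbound N c γ M) = (Real.log c + γ * Real.log M) / N := by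
  rw [MAbound, Real.log_rpow (by positivity), Real.log_mul hc.ne' (by positivity),
    Real.log_rpow hM]
  ring

lemma MAbound_pos {N : ℕ} {c γ M : ℝ} (hc : 0 < c) (hM : 0 < M) : 0 < MAbound N c γ M :=
  Real.rpow_pos_of_pos (by positivity) _

/-- Since `α β = N²`, the composed bound is homogeneous of degree one in `M`. -/
lemma one_le_of_le_MAbound_MAbound {N : ℕ} (hN : 0 < N) {α β lam mu M : ℝ}
    (hlam : 0 < lam) (hmu : 0 < mu) (hαβ : α * β = (N:ℝ) ^ 2) (hM : 0 < M)
    (h : M ≤ MAbound N lam α (MAbound N mu β M)) : 1 ≤ lam * mu ^ (α / N) := by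
  have hN' : (0:ℝ) < N := by exact_mod_cast hN
  have hlog := Real.log_le_log hM h
  rw [log_MAbound hlam (MAbound_pos hmu hM), log_MAbound hmu hM] at hlog
  rw [← Real.log_nonneg_iff (by positivity), Real.log_mul hlam.ne' (by positivity),
    Real.log_rpow hmu]
  have hhom : (Real.log lam + α * ((Real.log mu + β * Real.log M) / N)) / N
      = (Real.log lam + α / N * Real.log mu) / N + Real.log M := by
    field_simp
    linear_combination Real.log M * hαβ
  rw [hhom] at hlog
  have hpos : 0 ≤ (Real.log lam + α / N * Real.log mu) / N := by linarith
  simpa only [zero_mul] using (le_div_iff₀ hN').1 hpos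

theorem stmt12 (N : ℕ) (hN : 2 ≤ N) (α β lam mu : ℝ)
    (hα : 0 < α) (hβ : 0 < β) (hlam : 0 < lam) (hmu : 0 < mu)
    (hαβ : α * β = (N:ℝ) ^ 2)
    (v : ℝ → ℝ) (hv : memK v) (hne : ∃ t ∈ Icc (0:ℝ) 1, v t ≠ 0)
    (hfix : ∀ t ∈ Icc (0:ℝ) 1, MAopc N lam α (MAopc N mu β v) t = v t) :
    1 ≤ lam * mu ^ (α / N) := by
  obtain ⟨hvc, hv0, -⟩ := hv
  have hN0 : 0 < N := by omega
  have hvM : ∀ t ∈ Icc (0:ℝ) 1, v t ≤ supNorm v := fun t ht =>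
    (le_abs_self _).trans (le_supNorm hvc ht)
  have hwM : ∀ s ∈ Icc (0:ℝ) 1, MAopc N mu β v s ≤ MAbound N mu β (supNorm v) :=
    fun s hs => MAopc_le hN0 hmu.le hβ.le hvc hv0 hvM hs
  have hMle : supNorm v ≤ MAbound N lam α (MAbound N mu β (supNorm v)) :=
    supNorm_le fun t ht => by
      rw [abs_of_nonneg (hv0 t ht), ← hfix t ht]
      exact MAopc_le hN0 hlam.le hα.le (continuousOn_MAopc hβ.le hvc)
        (fun s hs => MAopc_nonneg hmu.le hv0 hs) hwM ht
  exact one_le_of_le_MAbound_MAbound hN0 hlam hmu hαβ (supNorm_pos hvc hne) hMle
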